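/- Let p be an odd prime and θ an integer such that 1 + θ² is not a square in ZMod p, and let (a_m)_{m=0,…,p} be the p+1 MUBs of ℂ^p (Fourier–Gauss bases and standard basis) and P_p the control-phase on ℂ^p ⊗ ℂ^p. Then for every μ ∈ ℤ/pℤ and every ν ∈ ℤ/pℤ with ν ≠ 0, each vector ψ = P_p^{θν}(a_μ^x ⊗ a_{μ+ν}^y) (x, y ∈ Fin p) is maximally entangled: its subsystem purity satisfies P(ψ) = 1/p. -/

import Mathlib

/-- `α_p = exp(2πi/p)`, the `p`-th root of unity. -/
noncomputable def rootOfUnity (p : ℕ) : ℂ := Complex.exp (2 * Real.pi * Complex.I / p)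

/-- The Fourier–Gauss vector `|j_m⟩` with components `p^{-1/2}·α_p^{js + ms²}`. -/
noncomputable def fourierGauss (p : ℕ) (j m : ℕ) : EuclideanSpace ℂ (Fin p) :=
  WithLp.toLp 2 (fun s : Fin p => (Real.sqrt p : ℂ)⁻¹ * rootOfUnity p ^ (j * (s : ℕ) + m * (s : ℕ) ^ 2))

/-- The product vector `(u ⊗ v)(a,b) = u(a)·v(b)`. -/
noncomputable def tens {p : ℕ} (u v : EuclideanSpace ℂ (Fin p)) :
    EuclideanSpace ℂ (Fin p × Fin p) :=
  WithLp.toLp 2 (fun ab : Fin p × Fin p => u ab.1 * v ab.2)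

/-- The control-phase `P_p`, the diagonal unitary with `P_p(|s⟩⊗|t⟩) = α_p^{st}|s⟩⊗|t⟩`. -/
noncomputable def cphase (p : ℕ) : Matrix (Fin p × Fin p) (Fin p × Fin p) ℂ :=
  Matrix.diagonal fun st : Fin p × Fin p => rootOfUnity p ^ ((st.1 : ℕ) * (st.2 : ℕ))

/-- The vectors `P_p^{θν} (a_μ^x ⊗ a_{μ+ν}^y)` of the generated bases (subscripts mod `p`). -/
noncomputable def cpVec (p : ℕ) (θ : ℤ) (μ ν : ZMod p) (x y : Fin p) :
    EuclideanSpace ℂ (Fin p × Fin p) :=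
  WithLp.toLp 2 ((cphase p ^ (((θ : ZMod p) * ν).val)).mulVec
    (tens (fourierGauss p (x : ℕ) μ.val) (fourierGauss p (y : ℕ) (μ.val + ν.val))))

/-- Purity of the reduced density operator on subsystem `A`. -/
noncomputable def purity {p : ℕ} (ψ : EuclideanSpace ℂ (Fin p × Fin p)) : ℝ :=
  ∑ a : Fin p, ∑ a' : Fin p,
    ‖∑ b : Fin p, ψ (a, b) * (starRingEnd ℂ) (ψ (a', b))‖ ^ 2

/-! The control phase multiplies the amplitude `u(a) v(b)` of a product vector by
`α^{kab}`. If every `|v(b)|²` equals `1/p`, the `(a, a')` entry of the reduced density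
operator is `u(a) conj u(a') · p⁻¹ Σ_b (α^{k(a - a')})^b`, a geometric sum that vanishes for
`a ≠ a'` because `p` is prime and `k ≢ 0`. The reduced operator is then `diag |u(a)|²`, i.e.
`p⁻¹ · 1` when also every `|u(a)|²` equals `1/p`, which is the case for Fourier–Gauss
vectors. Finally `k = θν ≢ 0`, since `1 + θ²` would be the square `1` if `θ ≡ 0`. -/

open Finset
open scoped ComplexConjugate

section

variable {p : ℕ}

lemma norm_rootOfUnity (p : ℕ) : ‖rootOfUnity p‖ = 1 := by
  simp [rootOfUnity, Complex.norm_exp, Complex.div_re]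

lemma isPrimitiveRoot_rootOfUnity [NeZero p] : IsPrimitiveRoot (rootOfUnity p) p :=
  Complex.isPrimitiveRoot_exp p (NeZero.ne p)

lemma rootOfUnity_pow_mul_conj_pow_pow_eq_one [NeZero p] (m n : ℕ) :
    (rootOfUnity p ^ m * conj (rootOfUnity p ^ n)) ^ p = 1 := by
  rw [mul_pow, ← map_pow, pow_right_comm, pow_right_comm _ n,
    isPrimitiveRoot_rootOfUnity.pow_eq_one, one_pow, one_pow, map_one, one_mul]

lemma rootOfUnity_pow_mul_conj_pow_eq_one_iff [NeZero p] {m n : ℕ} :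
    rootOfUnity p ^ m * conj (rootOfUnity p ^ n) = 1 ↔ (m : ZMod p) = n := by
  have hn : ‖rootOfUnity p ^ n‖ = 1 := by rw [norm_pow, norm_rootOfUnity, one_pow]
  rw [← Complex.inv_eq_conj hn, mul_inv_eq_one₀ (norm_ne_zero_iff.mp (hn.trans_ne one_ne_zero)),
    ZMod.natCast_eq_natCast_iff']
  have hω := isPrimitiveRoot_rootOfUnity (p := p)
  simpa only [← hω.eq_orderOf] using
    (hω.isOfFinOrder (NeZero.ne p)).pow_inj_mod (n := m) (m := n)

lemma sum_fin_pow_eq_zero {R : Type*} [CommRing R] [IsDomain R] {z : R} (hz : z ^ p = 1)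
    (h1 : z ≠ 1) : ∑ b : Fin p, z ^ (b : ℕ) = 0 := by
  have h := mul_neg_geom_sum z p
  rw [hz, sub_self, mul_eq_zero, sub_eq_zero] at h
  rw [Fin.sum_univ_eq_sum_range (z ^ ·)]
  exact h.resolve_left (Ne.symm h1)

lemma cphase_pow_mulVec_tens_apply (k : ℕ) (u v : EuclideanSpace ℂ (Fin p)) (a b : Fin p) :
    (cphase p ^ k).mulVec (tens u v) (a, b) =
      (rootOfUnity p ^ (k * a)) ^ (b : ℕ) * (u a * v b) := by
  simp only [cphase, Matrix.diagonal_pow, Matrix.mulVec_diagonal, tens, Pi.pow_apply,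
    ← pow_mul]
  ring

lemma purity_eq_of_sum_mul_conj_eq_ite {ψ : EuclideanSpace ℂ (Fin p × Fin p)} {c : ℝ}
    (h : ∀ a a', ∑ b, ψ (a, b) * conj (ψ (a', b)) = if a = a' then (c : ℂ) else 0) :
    purity ψ = p * c ^ 2 := by
  simp only [purity, h]
  simp [apply_ite]

theorem sum_cphase_pow_mulVec_tens_mul_conj [Fact p.Prime] {k : ℕ} (hk : (k : ZMod p) ≠ 0)
    (u : EuclideanSpace ℂ (Fin p)) {v : EuclideanSpace ℂ (Fin p)}
    (hv : ∀ b, ‖v b‖ ^ 2 = (p : ℝ)⁻¹) (a a' : Fin p) :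
    ∑ b, (cphase p ^ k).mulVec (tens u v) (a, b) * conj ((cphase p ^ k).mulVec (tens u v) (a', b))
      = if a = a' then (‖u a‖ ^ 2 : ℂ) else 0 := by
  set z := rootOfUnity p ^ (k * a) * conj (rootOfUnity p ^ (k * a'))
  have hterm (b : Fin p) : (cphase p ^ k).mulVec (tens u v) (a, b) *
      conj ((cphase p ^ k).mulVec (tens u v) (a', b)) =
        u a * conj (u a') * (p : ℂ)⁻¹ * z ^ (b : ℕ) := by
    rw [cphase_pow_mulVec_tens_apply, cphase_pow_mulVec_tens_apply]
    calc _ = z ^ (b : ℕ) * (u a * conj (u a')) * (v b * conj (v b)) := by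
          simp only [z, map_mul, map_pow, mul_pow]; ring
      _ = _ := by rw [Complex.mul_conj', ← Complex.ofReal_pow, hv]; push_cast; ring
  rw [sum_congr rfl fun b _ => hterm b, ← mul_sum]
  split_ifs with h
  · subst h
    have hz : z = 1 := rootOfUnity_pow_mul_conj_pow_eq_one_iff.mpr rfl
    have hp : (p : ℂ) ≠ 0 := Nat.cast_ne_zero.mpr (NeZero.ne p)
    simp only [hz, one_pow, sum_const, card_univ, Fintype.card_fin, nsmul_eq_mul, mul_one]
    rw [Complex.mul_conj', inv_mul_cancel_right₀ hp]
  · have hz : z ≠ 1 := by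
      rw [Ne, rootOfUnity_pow_mul_conj_pow_eq_one_iff]
      push_cast
      rw [mul_right_inj' hk, ZMod.natCast_eq_natCast_iff', Nat.mod_eq_of_lt a.isLt,
        Nat.mod_eq_of_lt a'.isLt]
      exact fun h' => h (Fin.ext h')
    rw [sum_fin_pow_eq_zero (rootOfUnity_pow_mul_conj_pow_pow_eq_one _ _) hz, mul_zero]

theorem purity_cphase_pow_mulVec_tens [Fact p.Prime] {k : ℕ} (hk : (k : ZMod p) ≠ 0)
    {u v : EuclideanSpace ℂ (Fin p)} (hu : ∀ a, ‖u a‖ ^ 2 = (p : ℝ)⁻¹)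
    (hv : ∀ b, ‖v b‖ ^ 2 = (p : ℝ)⁻¹) :
    purity (WithLp.toLp 2 ((cphase p ^ k).mulVec (tens u v))) = 1 / p := by
  have hp : (p : ℝ) ≠ 0 := Nat.cast_ne_zero.mpr (NeZero.ne p)
  rw [purity_eq_of_sum_mul_conj_eq_ite (c := (p : ℝ)⁻¹)]
  · field_simp
  · intro a a'
    simpa only [← Complex.ofReal_pow, hu, PiLp.toLp_apply]
      using sum_cphase_pow_mulVec_tens_mul_conj hk u hv a a'

lemma norm_fourierGauss_apply_sq (j m : ℕ) (s : Fin p) :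
    ‖fourierGauss p j m s‖ ^ 2 = (p : ℝ)⁻¹ := by
  simp [fourierGauss, norm_rootOfUnity]

end

theorem cpVec_maximally_entangled_general (p : ℕ) (hp : p.Prime) (θ : ℤ)
    (hθ : ¬ ∃ x : ZMod p, x ^ 2 = 1 + (θ : ZMod p) ^ 2)
    (μ ν : ZMod p) (hν : ν ≠ 0) (x y : Fin p) :
    purity (cpVec p θ μ ν x y) = 1 / (p : ℝ) := by
  have : Fact p.Prime := ⟨hp⟩
  have hθ0 : (θ : ZMod p) ≠ 0 := fun h => hθ ⟨1, by rw [h]; ring⟩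
  refine purity_cphase_pow_mulVec_tens ?_ (norm_fourierGauss_apply_sq _ _)
    (norm_fourierGauss_apply_sq _ _)
  rw [ZMod.natCast_zmod_val]
  exact mul_ne_zero hθ0 hν

/-- If `1 + θ²` is not a square mod the odd prime `p`, then for `ν ≠ 0` every vector
`P_p^{θν}(a_μ^x ⊗ a_{μ+ν}^y)` is maximally entangled: its subsystem purity is `1/p`. -/
theorem cpVec_maximally_entangled (p : ℕ) (hp : p.Prime) (hodd : Odd p) (θ : ℤ)
    (hθ : ¬ ∃ x : ZMod p, x ^ 2 = 1 + (θ : ZMod p) ^ 2)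
    (μ ν : ZMod p) (hν : ν ≠ 0) (x y : Fin p) :
    purity (cpVec p θ μ ν x y) = 1 / (p : ℝ) :=
  cpVec_maximally_entangled_general p hp θ hθ μ ν hν x y
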